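/- arXiv:1801.00267 — 3 statements merged into one kernel-verified Lean document; each statement's English description precedes it below -/
import Mathlib

section
/- Let (m_k)_{k≥1} be integers with m_k ≥ 2, define m̃_0 = 1, m̃_k = m_k^{m̃_{k-1}}, and let (s_k) be reals with s_k ≥ log 2 and s_k ≤ A·s_{k+1} for all k ≥ M₀ (for some A > 0, M₀ ∈ ℕ). Then ∑_{k=1}^{n} m̃_{k-1}·s_k / (m̃_{n-1}·s_n) → 1 as n → ∞. -/
/-!
Write `D j = m̃_j s_{j+1}`, so that after shifting `n` by one the quotient is
`(∑_{j ≤ n} D j) / D n`. Since `m̃_{j+1} ≥ 2 ^ m̃_j` and `m̃` is unbounded,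
`m̃_j / m̃_{j+1} → 0`, and the goodness condition bounds `s_{j+1} / s_{j+2}` by `A`; hence
`D j / D (j + 1) → 0`. For such a sequence `a n = (∑_{j < n} D j) / D n` satisfies
`a (n + 1) = (a n + 1) · D n / D (n + 1)`, which keeps `a` bounded once the ratio is below `1/2`
and then forces `a n → 0`.
-/

open Filter Topology Finset

section RatioToZero

variable {D : ℕ → ℝ}

theorem tendsto_sum_range_div_of_tendsto_div_succ (hD : ∀ n, 0 < D n)
    (hratio : Tendsto (fun n => D n / D (n + 1)) atTop (𝓝 0)) :
    Tendsto (fun n => (∑ k ∈ range n, D k) / D n) atTop (𝓝 0) := by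
  set a : ℕ → ℝ := fun n => (∑ k ∈ range n, D k) / D n
  have ha_nonneg : ∀ n, 0 ≤ a n := fun n =>
    div_nonneg (sum_nonneg fun k _ => (hD k).le) (hD n).le
  have ha_succ : ∀ n, a (n + 1) = (a n + 1) * (D n / D (n + 1)) := fun n => by
    have := (hD n).ne'
    simp only [a, sum_range_succ]
    field_simp
  obtain ⟨N, hN⟩ := eventually_atTop.1 (hratio.eventually (eventually_le_nhds one_half_pos))
  set B := max (a N) 1
  have ha_le : ∀ n ≥ N, a n ≤ B := by
    intro n hn
    induction n, hn using Nat.le_induction with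
    | base => exact le_max_left _ _
    | succ n hn ih =>
      have hq := hN n hn
      have hq0 := div_nonneg (hD n).le (hD (n + 1)).le
      rw [ha_succ]
      nlinarith [le_max_right (a N) 1, ha_nonneg n]
  rw [← tendsto_add_atTop_iff_nat 1]
  refine tendsto_of_tendsto_of_tendsto_of_le_of_le' tendsto_const_nhds
    (by simpa using hratio.const_mul (B + 1)) (Eventually.of_forall fun n => ha_nonneg _) ?_
  filter_upwards [eventually_ge_atTop N] with n hn
  rw [ha_succ]
  exact mul_le_mul_of_nonneg_right (by linarith [ha_le n hn])
    (div_nonneg (hD n).le (hD (n + 1)).le)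

theorem tendsto_sum_range_succ_div_of_tendsto_div_succ (hD : ∀ n, 0 < D n)
    (hratio : Tendsto (fun n => D n / D (n + 1)) atTop (𝓝 0)) :
    Tendsto (fun n => (∑ k ∈ range (n + 1), D k) / D n) atTop (𝓝 1) := by
  have h := (tendsto_sum_range_div_of_tendsto_div_succ hD hratio).add_const 1
  rw [zero_add] at h
  refine h.congr fun n => ?_
  rw [sum_range_succ, add_div, div_self (hD n).ne']

end RatioToZero

section Tower

variable {m mt : ℕ → ℕ}

theorem two_pow_tower_le_tower_succ (hm : ∀ k ≥ 1, 2 ≤ m k)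
    (hrec : ∀ k ≥ 1, mt k = m k ^ mt (k - 1)) (k : ℕ) : 2 ^ mt k ≤ mt (k + 1) := by
  rw [hrec (k + 1) k.succ_pos]
  exact Nat.pow_le_pow_left (hm (k + 1) k.succ_pos) _

theorem tower_strictMono (hm : ∀ k ≥ 1, 2 ≤ m k)
    (hrec : ∀ k ≥ 1, mt k = m k ^ mt (k - 1)) : StrictMono mt :=
  strictMono_nat_of_lt_succ fun k =>
    (Nat.lt_two_pow_self).trans_le (two_pow_tower_le_tower_succ hm hrec k)

theorem tendsto_tower_div_tower_succ (hm : ∀ k ≥ 1, 2 ≤ m k)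
    (hrec : ∀ k ≥ 1, mt k = m k ^ mt (k - 1)) :
    Tendsto (fun k => (mt k : ℝ) / mt (k + 1)) atTop (𝓝 0) := by
  have hpow : Tendsto (fun k => (mt k : ℝ) / 2 ^ mt k) atTop (𝓝 0) := by
    simpa [Function.comp_def] using
      (tendsto_pow_const_div_const_pow_of_one_lt 1 one_lt_two).comp
        (tower_strictMono hm hrec).tendsto_atTop
  refine tendsto_of_tendsto_of_tendsto_of_le_of_le tendsto_const_nhds hpow
    (fun k => by positivity) fun k => ?_
  have h := two_pow_tower_le_tower_succ hm hrec k
  exact div_le_div_of_nonneg_left (Nat.cast_nonneg _) (by positivity) (by exact_mod_cast h)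

end Tower

theorem stmt_13_general (m mt : ℕ → ℕ) (hm : ∀ k ≥ 1, 2 ≤ m k)
    (h0 : mt 0 = 1) (hrec : ∀ k ≥ 1, mt k = m k ^ mt (k - 1))
    (s : ℕ → ℝ) (hs : ∀ k, Real.log 2 ≤ s k)
    (A : ℝ) (M₀ : ℕ) (hgood : ∀ k ≥ M₀, s k ≤ A * s (k + 1)) :
    Filter.Tendsto
      (fun n => (∑ k ∈ Finset.Icc 1 n, (mt (k - 1) : ℝ) * s k) / ((mt (n - 1) : ℝ) * s n))
      Filter.atTop (nhds 1) := by
  have hs_pos : ∀ k, 0 < s k := fun k => (Real.log_pos one_lt_two).trans_le (hs k)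
  have hmt_pos : ∀ k, 0 < mt k := fun
    | 0 => h0 ▸ one_pos
    | k + 1 => (Nat.one_le_two_pow).trans (two_pow_tower_le_tower_succ hm hrec k)
  set D : ℕ → ℝ := fun j => mt j * s (j + 1)
  have hD : ∀ j, 0 < D j := fun j => mul_pos (by exact_mod_cast hmt_pos j) (hs_pos _)
  have hratio : Tendsto (fun j => D j / D (j + 1)) atTop (𝓝 0) := by
    refine tendsto_of_tendsto_of_tendsto_of_le_of_le' tendsto_const_nhds
      (by simpa using (tendsto_tower_div_tower_succ hm hrec).const_mul A)
      (Eventually.of_forall fun j => (div_pos (hD j) (hD (j + 1))).le) ?_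
    filter_upwards [eventually_ge_atTop M₀] with j hj
    have hmt : (mt (j + 1) : ℝ) ≠ 0 := by exact_mod_cast (hmt_pos _).ne'
    rw [div_le_iff₀ (hD _)]
    calc D j ≤ mt j * (A * s (j + 2)) :=
          mul_le_mul_of_nonneg_left (hgood _ (by omega)) (Nat.cast_nonneg _)
      _ = A * (mt j / mt (j + 1)) * D (j + 1) := by simp only [D]; field_simp
  rw [← tendsto_add_atTop_iff_nat 1]
  refine (tendsto_sum_range_succ_div_of_tendsto_div_succ hD hratio).congr fun n => ?_
  rw [← Ico_add_one_right_eq_Icc, sum_Ico_eq_sum_range]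
  simp [D, add_comm 1]

/-- With the tower sequence `m̃` and a good sequence `s`, the partial sums
`∑_{k=1}^n m̃_{k-1} s_k` are asymptotic to the last term `m̃_{n-1} s_n`. -/
theorem stmt_13 (m mt : ℕ → ℕ) (hm : ∀ k ≥ 1, 2 ≤ m k)
    (h0 : mt 0 = 1) (hrec : ∀ k ≥ 1, mt k = m k ^ mt (k - 1))
    (s : ℕ → ℝ) (hs : ∀ k, Real.log 2 ≤ s k)
    (A : ℝ) (hA : 0 < A) (M₀ : ℕ) (hgood : ∀ k ≥ M₀, s k ≤ A * s (k + 1)) :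
    Filter.Tendsto
      (fun n => (∑ k ∈ Finset.Icc 1 n, (mt (k - 1) : ℝ) * s k) / ((mt (n - 1) : ℝ) * s n))
      Filter.atTop (nhds 1) :=
  stmt_13_general m mt hm h0 hrec s hs A M₀ hgood
end

section
/- Let α ∈ (0,1) and (m_k) integers with m_k ≥ 2. Define m̃_0 = 1, m̃_k = m_k^{m̃_{k-1}}, and recursively c_1 = m_1, o_1 = 1, o_{k+1} = m_{k+1}^{⌊α·c_k⌋·o_k}, c_{k+1} = m_{k+1}^{m̃_k − ⌊α·c_k⌋·o_k}. Then c_k·o_k = m̃_k for all k ≥ 1, and c_k ≥ m̃_k^{1−α} for all k ≥ 1. -/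
/-- For the orbit-count and orbit-size sequences `c_k`, `o_k` of the construction
of `H^α`, we have `c_k·o_k = m̃_k` and `c_k ≥ m̃_k^{1-α}`. -/
theorem stmt_18 (α : ℝ) (hα : α ∈ Set.Ioo (0 : ℝ) 1)
    (m mt : ℕ → ℕ) (hm : ∀ k ≥ 1, 2 ≤ m k)
    (h0 : mt 0 = 1) (hrec : ∀ k ≥ 1, mt k = m k ^ mt (k - 1))
    (c o : ℕ → ℕ) (hc1 : c 1 = m 1) (ho1 : o 1 = 1)
    (ho : ∀ k ≥ 1, o (k + 1) = m (k + 1) ^ ((⌊α * (c k : ℝ)⌋).toNat * o k))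
    (hc : ∀ k ≥ 1, c (k + 1) = m (k + 1) ^ (mt k - (⌊α * (c k : ℝ)⌋).toNat * o k)) :
    ∀ k ≥ 1, c k * o k = mt k ∧ (mt k : ℝ) ^ ((1 : ℝ) - α) ≤ (c k : ℝ) := by
  obtain ⟨hα0, hα1⟩ := hα
  intro k hk
  induction k, hk using Nat.le_induction with
  | base =>
    have hmt1 : mt 1 = m 1 := by rw [hrec 1 le_rfl]; simp [h0]
    refine ⟨by simp [hc1, ho1, hmt1], ?_⟩
    rw [hc1, ← hmt1]
    have h1 : (1 : ℝ) ≤ (mt 1 : ℝ) := by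
      have := hm 1 le_rfl
      rw [hmt1]
      exact_mod_cast Nat.one_le_of_lt this
    calc (mt 1 : ℝ) ^ ((1 : ℝ) - α) ≤ (mt 1 : ℝ) ^ (1 : ℝ) :=
          Real.rpow_le_rpow_of_exponent_le h1 (by linarith)
      _ = (mt 1 : ℝ) := Real.rpow_one _
  | succ k hk ih =>
    obtain ⟨ih1, ih2⟩ := ih
    set t := (⌊α * (c k : ℝ)⌋).toNat with ht
    have hmk : 2 ≤ m (k + 1) := hm (k + 1) (by omega)
    have hmtk1 : mt (k + 1) = m (k + 1) ^ mt k := by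
      rw [hrec (k + 1) (by omega)]; simp
    have hmtpos : 1 ≤ mt k := by
      rw [hrec k hk]
      exact Nat.one_le_pow _ _ (by have := hm k hk; omega)
    have hcnn : (0 : ℝ) ≤ α * (c k : ℝ) := by positivity
    have htle : (t : ℝ) ≤ α * (c k : ℝ) := by
      have : ((t : ℤ) : ℝ) = ((⌊α * (c k : ℝ)⌋ : ℤ) : ℝ) := by
        rw [ht, Int.toNat_of_nonneg (Int.floor_nonneg.mpr hcnn)]
      rw [show ((t : ℕ) : ℝ) = ((t : ℤ) : ℝ) by push_cast; ring, this]
      exact Int.floor_le _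
    have hkey : (t : ℝ) * (o k : ℝ) ≤ α * (mt k : ℝ) := by
      have hok : (0 : ℝ) ≤ (o k : ℝ) := by positivity
      calc (t : ℝ) * (o k : ℝ) ≤ (α * (c k : ℝ)) * (o k : ℝ) :=
            mul_le_mul_of_nonneg_right htle hok
        _ = α * ((c k * o k : ℕ) : ℝ) := by push_cast; ring
        _ = α * (mt k : ℝ) := by rw [ih1]
    have hsub : t * o k ≤ mt k := by
      have : ((t * o k : ℕ) : ℝ) ≤ ((mt k : ℕ) : ℝ) := by
        push_cast
        have : α * (mt k : ℝ) ≤ (mt k : ℝ) := by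
          have : (0 : ℝ) ≤ (mt k : ℝ) := by positivity
          nlinarith
        linarith
      exact_mod_cast this
    constructor
    · rw [hc k hk, ho k hk, ← pow_add, Nat.sub_add_cancel hsub, hmtk1]
    · have hm1 : (1 : ℝ) ≤ (m (k + 1) : ℝ) := by exact_mod_cast Nat.one_le_of_lt hmk
      have hm0 : (0 : ℝ) ≤ (m (k + 1) : ℝ) := by linarith
      have hcast : ((mt k - t * o k : ℕ) : ℝ) = (mt k : ℝ) - (t : ℝ) * (o k : ℝ) := by
        push_cast [Nat.cast_sub hsub]; ring
      have hexp : (mt k : ℝ) * (1 - α) ≤ ((mt k - t * o k : ℕ) : ℝ) := by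
        rw [hcast]; nlinarith
      calc (mt (k + 1) : ℝ) ^ ((1 : ℝ) - α)
          = ((m (k + 1) : ℝ) ^ ((mt k : ℕ) : ℝ)) ^ ((1 : ℝ) - α) := by
            rw [hmtk1]; push_cast; rw [Real.rpow_natCast]
        _ = (m (k + 1) : ℝ) ^ ((mt k : ℝ) * ((1 : ℝ) - α)) := by
            rw [← Real.rpow_mul hm0]
        _ ≤ (m (k + 1) : ℝ) ^ (((mt k - t * o k : ℕ) : ℝ)) :=
            Real.rpow_le_rpow_of_exponent_le hm1 hexp
        _ = ((m (k + 1) ^ (mt k - t * o k) : ℕ) : ℝ) := by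
            rw [Real.rpow_natCast]; push_cast; ring
        _ = (c (k + 1) : ℝ) := by rw [hc k hk]
end

section
/- Let α ∈ (0,1), (m_k) integers with m_k ≥ 2, m̃_0 = 1, m̃_k = m_k^{m̃_{k-1}}, and let c_k, o_k be defined by c_1 = m_1, o_1 = 1, o_{k+1} = m_{k+1}^{⌊α·c_k⌋·o_k}, c_{k+1} = m̃_{k+1}/o_{k+1}. Then c_n → ∞ and ⌊α·c_n⌋·o_n/m̃_n → α as n → ∞. -/
/-!
Since `o (k+1) = m (k+1) ^ (t k * o k)` with `t k = ⌊α c k⌋₊ ≤ c k`, induction gives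
`c k * o k = mt k`, so the ratio in question is just `⌊α c n⌋ / c n`, which tends to `α` once
`c n → ∞`. For the latter, `c (k+1) = m (k+1) ^ ((c k - t k) * o k) ≥ (1 - α) c k o k = (1 - α) mt k`,
and the tower `mt k` exceeds `k`.
-/

open Filter Topology

theorem self_lt_tower {m mt : ℕ → ℕ} (hm : ∀ k ≥ 1, 2 ≤ m k) (h0 : mt 0 = 1)
    (hrec : ∀ k ≥ 1, mt k = m k ^ mt (k - 1)) (k : ℕ) : k < mt k := by
  induction k with
  | zero => omega
  | succ k ih =>
    rw [hrec (k + 1) k.succ_pos, Nat.add_sub_cancel]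
    exact (Nat.succ_le_of_lt ih).trans_lt (Nat.lt_pow_self (hm (k + 1) k.succ_pos))

theorem tendsto_tower_atTop {m mt : ℕ → ℕ} (hm : ∀ k ≥ 1, 2 ≤ m k) (h0 : mt 0 = 1)
    (hrec : ∀ k ≥ 1, mt k = m k ^ mt (k - 1)) : Tendsto mt atTop atTop :=
  tendsto_atTop_mono (fun k => (self_lt_tower hm h0 hrec k).le) tendsto_id

theorem mul_eq_tower {m mt c o t : ℕ → ℕ} (hrec : ∀ k ≥ 1, mt k = m k ^ mt (k - 1))
    (ht : ∀ k, t k ≤ c k) (ho : ∀ k ≥ 1, o (k + 1) = m (k + 1) ^ (t k * o k))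
    (hc : ∀ k ≥ 1, c (k + 1) = mt (k + 1) / o (k + 1)) (h1 : c 1 * o 1 = mt 1) :
    ∀ k ≥ 1, c k * o k = mt k := by
  intro k hk
  induction k, hk using Nat.le_induction with
  | base => exact h1
  | succ k hk ih =>
    have hdvd : o (k + 1) ∣ mt (k + 1) := by
      rw [ho k hk, hrec (k + 1) k.succ_pos, Nat.add_sub_cancel, ← ih]
      exact pow_dvd_pow _ (Nat.mul_le_mul_right _ (ht k))
    rw [hc k hk, Nat.div_mul_cancel hdvd]

theorem sub_mul_le_succ {m mt c o t : ℕ → ℕ} (hm : ∀ k ≥ 1, 2 ≤ m k)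
    (hrec : ∀ k ≥ 1, mt k = m k ^ mt (k - 1))
    (ho : ∀ k ≥ 1, o (k + 1) = m (k + 1) ^ (t k * o k))
    (hc : ∀ k ≥ 1, c (k + 1) = mt (k + 1) / o (k + 1)) {k : ℕ} (hk : 1 ≤ k)
    (ht : t k ≤ c k) (hinv : c k * o k = mt k) : (c k - t k) * o k ≤ c (k + 1) := by
  have hm2 := hm (k + 1) k.succ_pos
  rw [hc k hk, ho k hk, hrec (k + 1) k.succ_pos, Nat.add_sub_cancel, ← hinv,
    Nat.pow_div (Nat.mul_le_mul_right _ ht) (by omega), ← Nat.sub_mul]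
  exact (Nat.lt_pow_self hm2).le

theorem floor_mul_natCast_le {α : ℝ} (hα1 : α ≤ 1) (n : ℕ) : ⌊α * n⌋₊ ≤ n :=
  Nat.floor_le_of_le (mul_le_of_le_one_left n.cast_nonneg hα1)

theorem one_sub_mul_le_sub_floor_mul {α : ℝ} (hα0 : 0 ≤ α) (hα1 : α ≤ 1) (n : ℕ) :
    (1 - α) * n ≤ ((n - ⌊α * n⌋₊ : ℕ) : ℝ) := by
  rw [Nat.cast_sub (floor_mul_natCast_le hα1 n)]
  linarith [Nat.floor_le (mul_nonneg hα0 n.cast_nonneg)]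

theorem one_sub_mul_tower_le_succ {α : ℝ} (hα0 : 0 ≤ α) (hα1 : α ≤ 1) {m mt c o : ℕ → ℕ}
    (hm : ∀ k ≥ 1, 2 ≤ m k) (hrec : ∀ k ≥ 1, mt k = m k ^ mt (k - 1))
    (ho : ∀ k ≥ 1, o (k + 1) = m (k + 1) ^ (⌊α * c k⌋₊ * o k))
    (hc : ∀ k ≥ 1, c (k + 1) = mt (k + 1) / o (k + 1)) {k : ℕ} (hk : 1 ≤ k)
    (hinv : c k * o k = mt k) : (1 - α) * mt k ≤ c (k + 1) := by
  have hsub := sub_mul_le_succ hm hrec ho hc hk (floor_mul_natCast_le hα1 (c k)) hinv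
  calc (1 - α) * mt k = (1 - α) * c k * o k := by rw [← hinv]; push_cast; ring
    _ ≤ ((c k - ⌊α * c k⌋₊ : ℕ) : ℝ) * o k := by
      gcongr; exact one_sub_mul_le_sub_floor_mul hα0 hα1 _
    _ ≤ c (k + 1) := by exact_mod_cast hsub

/-- For the construction sequences `c_k`, `o_k`, we have `c_n → ∞` and
`⌊α·c_n⌋·o_n / m̃_n → α`. -/
theorem stmt_19 (α : ℝ) (hα : α ∈ Set.Ioo (0 : ℝ) 1)
    (m mt : ℕ → ℕ) (hm : ∀ k ≥ 1, 2 ≤ m k)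
    (h0 : mt 0 = 1) (hrec : ∀ k ≥ 1, mt k = m k ^ mt (k - 1))
    (c o : ℕ → ℕ) (hc1 : c 1 = m 1) (ho1 : o 1 = 1)
    (ho : ∀ k ≥ 1, o (k + 1) = m (k + 1) ^ ((⌊α * (c k : ℝ)⌋).toNat * o k))
    (hc : ∀ k ≥ 1, c (k + 1) = mt (k + 1) / o (k + 1)) :
    Filter.Tendsto (fun n => (c n : ℝ)) Filter.atTop Filter.atTop ∧
    Filter.Tendsto (fun n => (⌊α * (c n : ℝ)⌋ : ℝ) * (o n : ℝ) / (mt n : ℝ))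
      Filter.atTop (nhds α) := by
  obtain ⟨hα0, hα1⟩ := hα
  simp only [Int.floor_toNat] at ho
  have hinv := mul_eq_tower hrec (fun k => floor_mul_natCast_le hα1.le (c k)) ho hc
    (by simp [hc1, ho1, hrec 1 le_rfl, h0])
  have hc_top : Tendsto (fun n => (c n : ℝ)) atTop atTop := by
    rw [← tendsto_add_atTop_iff_nat 1]
    refine tendsto_atTop_mono' atTop ((eventually_ge_atTop 1).mono fun k hk =>
      one_sub_mul_tower_le_succ hα0.le hα1.le hm hrec ho hc hk (hinv k hk)) ?_
    exact (tendsto_natCast_atTop_atTop.comp (tendsto_tower_atTop hm h0 hrec)).const_mul_atTop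
      (sub_pos.2 hα1)
  refine ⟨hc_top, ((tendsto_nat_floor_mul_div_atTop hα0.le).comp hc_top).congr' ?_⟩
  filter_upwards [eventually_ge_atTop 1] with n hn
  have ho0 : (o n : ℝ) ≠ 0 := by
    have := self_lt_tower hm h0 hrec n
    exact_mod_cast right_ne_zero_of_mul (show c n * o n ≠ 0 by rw [hinv n hn]; omega)
  rw [Function.comp_apply, natCast_floor_eq_intCast_floor (by positivity), ← hinv n hn,
    Nat.cast_mul, mul_div_mul_right _ _ ho0]
end
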